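/- Let K be a field and let C be a connected graded K-algebra generated in degree 1 that is the internal direct sum C = A ⊓ B of graded subalgebras A and B. Suppose A is strongly Koszul with respect to a minimal system of homogeneous generators X_A = {a_1, …, a_c} ⊆ A_1 of A_+, and B is strongly Koszul with respect to a minimal system of homogeneous generators X_B = {b_1, …, b_d} ⊆ B_1 of B_+. Then X_A ∪ X_B is a minimal system of homogeneous generators of C_+ and C is strongly Koszul with respect to X_A ∪ X_B. -/

import Mathlib

/-!
Every `g ∈ C` is `u + w` with `u ∈ A` and `w ∈ B_+`, and `w` annihilates `A_+` from the
left. So for `S ⊆ A_+` the left ideal of `C` generated by `S` consists of the elements of the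
left ideal `(S)` of `A`. As `A ∩ B_+ = 0`, an element of `A` in the left ideal of `C`
generated by `Y_A ∪ Y_B` (with `Y_A ⊆ A_+`, `Y_B ⊆ B_+`) already lies in `(Y_A)`.
Generation and minimality of `X_A ∪ X_B` follow from those of `X_A` and `X_B`, and for
`a ∈ X_A \ Y` the same argument gives `(Y) : a = (Z ∪ X_B)`, where `(Y ∩ X_A) : a = (Z)`
in `A`.
-/

/-- The colon ideal `I : x = {a | a * x ∈ I}` of a left ideal `I` by an element `x`. -/
def colonIdeal {A : Type*} [Ring A] (I : Ideal A) (x : A) : Ideal A :=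
  Submodule.comap (LinearMap.toSpanSingleton A A x) I

/-- The augmentation ideal `A_+` of a connected graded algebra. -/
def augIdeal {K A : Type*} [Field K] [Ring A] [Algebra K A]
    (𝒜 : ℕ → Submodule K A) : Ideal A :=
  Ideal.span (⋃ n : ℕ, ((𝒜 (n + 1) : Submodule K A) : Set A))

/-- `A` is strongly Koszul with respect to a set `X` of (homogeneous) generators of the
augmentation ideal `P`: `X` generates `P` as a left ideal, no proper subset of `X`
generates `P` (minimality), and for every `Y ⊊ X` and `x ∈ X \ Y` the colon ideal
`(Y) : x` is generated by a subset of `X`. -/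
def StronglyKoszulWrt {A : Type*} [Ring A] (P : Ideal A) (X : Set A) : Prop :=
  Ideal.span X = P ∧ (∀ Y ⊂ X, Ideal.span Y ≠ P) ∧
    ∀ Y ⊂ X, ∀ z ∈ X \ Y, ∃ Z ⊆ X, colonIdeal (Ideal.span Y) z = Ideal.span Z

lemma mem_colonIdeal {A : Type*} [Ring A] {I : Ideal A} {x z : A} :
    x ∈ colonIdeal I z ↔ x * z ∈ I := by
  simp [colonIdeal, LinearMap.toSpanSingleton_apply, smul_eq_mul]

section SpanInSubring

variable {C σ : Type*} [Ring C] [SetLike σ C] [SubringClass σ C] {A : σ}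

lemma coe_mem_span_image_of_mem_span {S : Set A} {y : A} (hy : y ∈ Ideal.span S) :
    (y : C) ∈ Ideal.span (Subtype.val '' S) := by
  rw [← SubringClass.coe_subtype, ← Ideal.map_span]
  exact Ideal.mem_map_of_mem _ hy

lemma mem_span_image_val_iff {I : Ideal A}
    (hI : ∀ g : C, ∃ u ∈ A, ∀ y ∈ I, g * y = u * y) {S : Set A} (hS : S ⊆ I) {x : C} :
    x ∈ Ideal.span (Subtype.val '' S) ↔ ∃ y ∈ Ideal.span S, (y : C) = x := by
  refine ⟨fun hx => ?_, fun ⟨y, hy, hyx⟩ => hyx ▸ coe_mem_span_image_of_mem_span hy⟩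
  induction hx using Submodule.span_induction with
  | mem x hx =>
    obtain ⟨y, hy, rfl⟩ := hx
    exact ⟨y, Ideal.subset_span hy, rfl⟩
  | zero => exact ⟨0, zero_mem _, rfl⟩
  | add x x' _ _ ih ih' =>
    obtain ⟨y, hy, rfl⟩ := ih
    obtain ⟨y', hy', rfl⟩ := ih'
    exact ⟨y + y', add_mem hy hy', rfl⟩
  | smul g x _ ih =>
    obtain ⟨y, hy, rfl⟩ := ih
    obtain ⟨u, hu, hgu⟩ := hI g
    exact ⟨⟨u, hu⟩ * y, Ideal.mul_mem_left _ _ hy, (hgu y (Ideal.span_le.2 hS hy)).symm⟩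

end SpanInSubring

open DirectSum

local notation "π" => GradedRing.projZeroRingHom

section Graded

variable {K C : Type*} [Field K] [Ring C] [Algebra K C]
  (𝒞 : ℕ → Submodule K C) [GradedAlgebra 𝒞]

lemma augIdeal_eq_ker : augIdeal 𝒞 = RingHom.ker (π 𝒞) := by
  rw [← HomogeneousIdeal.toIdeal_irrelevant, HomogeneousIdeal.irrelevant_eq_span, augIdeal]
  congr 1
  ext x
  simp only [Set.mem_iUnion, SetLike.mem_coe, exists_prop]
  exact ⟨fun ⟨n, hx⟩ => ⟨n + 1, n.succ_pos, hx⟩,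
    fun ⟨n, hn, hx⟩ => ⟨n - 1, Nat.sub_add_cancel hn ▸ hx⟩⟩

def Subalgebra.augIdeal (A : Subalgebra K C) : Ideal A :=
  RingHom.ker ((π 𝒞).comp A.val.toRingHom)

variable {𝒞}

lemma span_homogeneous_pos_eq_augIdeal {A : Subalgebra K C}
    (hA : ∀ y ∈ A, ∀ n : ℕ, ((decompose 𝒞 y n : 𝒞 n) : C) ∈ A) :
    Ideal.span {y : A | ∃ n : ℕ, (y : C) ∈ 𝒞 (n + 1)} = A.augIdeal 𝒞 := by
  classical
  refine le_antisymm (Ideal.span_le.2 ?_) fun y hy => ?_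
  · rintro y ⟨n, hy⟩
    exact decompose_of_mem_ne 𝒞 hy n.succ_ne_zero
  · have hsum : y = ∑ n ∈ (decompose 𝒞 (y : C)).support, ⟨_, hA y y.2 n⟩ :=
      Subtype.ext (by simp [sum_support_decompose])
    rw [hsum]
    refine Ideal.sum_mem _ fun n hn => Ideal.subset_span ?_
    obtain ⟨m, rfl⟩ := Nat.exists_eq_succ_of_ne_zero (n := n) <| by
      rintro rfl
      exact DFinsupp.mem_support_iff.1 hn (Subtype.ext hy)
    exact ⟨m, SetLike.coe_mem _⟩

end Graded

/-- The internal direct sum `C = A ⊓ B`: `C_n = A_n ⊕ B_n` for `n ≥ 1`, and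
`A_+ B_+ = B_+ A_+ = 0`. -/
structure IsGradedInternalSum {K C : Type*} [Field K] [Ring C] [Algebra K C]
    (𝒞 : ℕ → Submodule K C) [GradedAlgebra 𝒞] (A B : Subalgebra K C) : Prop where
  connected : 𝒞 0 = 1
  homogeneous_left : ∀ y ∈ A, ∀ n : ℕ, ((decompose 𝒞 y n : 𝒞 n) : C) ∈ A
  homogeneous_right : ∀ y ∈ B, ∀ n : ℕ, ((decompose 𝒞 y n : 𝒞 n) : C) ∈ B
  sup_eq : ∀ n, 1 ≤ n →
    𝒞 n = (Subalgebra.toSubmodule A ⊓ 𝒞 n) ⊔ (Subalgebra.toSubmodule B ⊓ 𝒞 n)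
  inf_eq_bot : ∀ n, 1 ≤ n →
    (Subalgebra.toSubmodule A ⊓ 𝒞 n) ⊓ (Subalgebra.toSubmodule B ⊓ 𝒞 n) = ⊥
  mul_eq_zero : ∀ u ∈ A, ∀ w ∈ B, π 𝒞 u = 0 → π 𝒞 w = 0 → u * w = 0 ∧ w * u = 0

namespace IsGradedInternalSum

variable {K C : Type*} [Field K] [Ring C] [Algebra K C]
  {𝒞 : ℕ → Submodule K C} [GradedAlgebra 𝒞] {A B : Subalgebra K C}

lemma symm (h : IsGradedInternalSum 𝒞 A B) : IsGradedInternalSum 𝒞 B A where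
  connected := h.connected
  homogeneous_left := h.homogeneous_right
  homogeneous_right := h.homogeneous_left
  sup_eq n hn := (h.sup_eq n hn).trans (sup_comm _ _)
  inf_eq_bot n hn := (inf_comm _ _).trans (h.inf_eq_bot n hn)
  mul_eq_zero u hu w hw hu0 hw0 := (h.mul_eq_zero w hw u hu hw0 hu0).symm

lemma exists_eq_add (h : IsGradedInternalSum 𝒞 A B) (g : C) :
    ∃ u ∈ A, ∃ w ∈ B, π 𝒞 w = 0 ∧ g = u + w := by
  suffices g ∈ Subalgebra.toSubmodule A ⊔
      (Subalgebra.toSubmodule B ⊓ LinearMap.ker (GradedAlgebra.proj 𝒞 0)) by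
    obtain ⟨u, hu, w, ⟨hw, hw0⟩, rfl⟩ := Submodule.mem_sup.1 this
    exact ⟨u, hu, w, hw, hw0, rfl⟩
  refine (Decomposition.isInternal 𝒞).submodule_iSup_eq_top.ge.trans (iSup_le fun n => ?_)
    Submodule.mem_top
  rcases n with _ | n
  · rw [h.connected, ← Algebra.toSubmodule_bot]
    exact le_sup_of_le_left (Subalgebra.toSubmodule.monotone bot_le)
  · rw [h.sup_eq (n + 1) le_add_self]
    exact sup_le_sup inf_le_left <| inf_le_inf_left _ fun x hx =>
      decompose_of_mem_ne 𝒞 hx n.succ_ne_zero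

lemma eq_zero_of_mem_of_mem (h : IsGradedInternalSum 𝒞 A B) {x : C} (hxA : x ∈ A)
    (hxB : x ∈ B) (hx0 : π 𝒞 x = 0) : x = 0 := by
  classical
  have hcomp : ∀ n, ((decompose 𝒞 x n : 𝒞 n) : C) = 0 := by
    rintro (_ | n)
    · exact hx0
    · have hmem : ((decompose 𝒞 x (n + 1) : 𝒞 (n + 1)) : C) ∈ (⊥ : Submodule K C) :=
        h.inf_eq_bot (n + 1) le_add_self ▸ ⟨⟨h.homogeneous_left x hxA _, SetLike.coe_mem _⟩,
          h.homogeneous_right x hxB _, SetLike.coe_mem _⟩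
      exact (Submodule.mem_bot K).1 hmem
  rw [← sum_support_decompose 𝒞 x]
  exact Finset.sum_eq_zero fun n _ => hcomp n

lemma exists_mul_eq_mul (h : IsGradedInternalSum 𝒞 A B) (g : C) :
    ∃ u ∈ A, ∀ y ∈ A.augIdeal 𝒞, g * y = u * y := by
  obtain ⟨u, hu, w, hw, hw0, rfl⟩ := h.exists_eq_add g
  refine ⟨u, hu, fun y hy => ?_⟩
  rw [add_mul, (h.mul_eq_zero y y.2 w hw hy hw0).2, add_zero]

variable {XA : Set A} {XB : Set B} {Y : Set C}

lemma exists_mem_span_of_mem_span (h : IsGradedInternalSum 𝒞 A B)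
    (hXA : XA ⊆ A.augIdeal 𝒞) (hXB : XB ⊆ B.augIdeal 𝒞)
    (hY : Y ⊆ Subtype.val '' XA ∪ Subtype.val '' XB) {x : C} (hxA : x ∈ A) (hx : x ∈ Ideal.span Y) :
    ∃ y ∈ Ideal.span (XA ∩ Subtype.val ⁻¹' Y), (y : C) = x := by
  have hYeq :
      Y = Subtype.val '' (XA ∩ Subtype.val ⁻¹' Y) ∪ Subtype.val '' (XB ∩ Subtype.val ⁻¹' Y) := by
    rw [Set.image_inter_preimage, Set.image_inter_preimage, ← Set.union_inter_distrib_right,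
      Set.inter_eq_right.2 hY]
  rw [hYeq, Ideal.span_union, Submodule.mem_sup] at hx
  obtain ⟨_, hp, _, hq, rfl⟩ := hx
  obtain ⟨p, hpA, rfl⟩ :=
    (mem_span_image_val_iff h.exists_mul_eq_mul (Set.inter_subset_left.trans hXA)).1 hp
  obtain ⟨q, hqB, rfl⟩ :=
    (mem_span_image_val_iff h.symm.exists_mul_eq_mul (Set.inter_subset_left.trans hXB)).1 hq
  have hq0 : (q : C) = 0 :=
    h.eq_zero_of_mem_of_mem (by simpa using sub_mem hxA p.2) q.2
      (Ideal.span_le.2 (Set.inter_subset_left.trans hXB) hqB)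
  exact ⟨p, hpA, by rw [hq0, add_zero]⟩

lemma span_image_union_eq_augIdeal (h : IsGradedInternalSum 𝒞 A B)
    (hA : Ideal.span XA = A.augIdeal 𝒞) (hB : Ideal.span XB = B.augIdeal 𝒞) :
    Ideal.span (Subtype.val '' XA ∪ Subtype.val '' XB) = augIdeal 𝒞 := by
  rw [augIdeal_eq_ker]
  refine le_antisymm (Ideal.span_le.2 ?_) fun x hx => ?_
  · rintro _ (⟨y, hy, rfl⟩ | ⟨y, hy, rfl⟩)
    · exact (hA ▸ Ideal.subset_span hy : y ∈ A.augIdeal 𝒞)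
    · exact (hB ▸ Ideal.subset_span hy : y ∈ B.augIdeal 𝒞)
  obtain ⟨u, hu, w, hw, hw0, rfl⟩ := h.exists_eq_add x
  have hu0 : (⟨u, hu⟩ : A) ∈ Ideal.span XA := by
    rw [RingHom.mem_ker, map_add, hw0, add_zero] at hx
    rwa [hA]
  have hw0 : (⟨w, hw⟩ : B) ∈ Ideal.span XB := by rwa [hB]
  rw [Ideal.span_union]
  exact Submodule.add_mem_sup (coe_mem_span_image_of_mem_span hu0)
    (coe_mem_span_image_of_mem_span hw0)

lemma image_subset_of_image_subset_span (h : IsGradedInternalSum 𝒞 A B)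
    (hA : Ideal.span XA = A.augIdeal 𝒞) (hXB : XB ⊆ B.augIdeal 𝒞)
    (hmin : ∀ Y ⊂ XA, Ideal.span Y ≠ A.augIdeal 𝒞)
    (hY : Y ⊆ Subtype.val '' XA ∪ Subtype.val '' XB)
    (hspan : Subtype.val '' XA ⊆ (Ideal.span Y : Set C)) : Subtype.val '' XA ⊆ Y := by
  rintro _ ⟨x, hx, rfl⟩
  by_contra hxY
  obtain ⟨p, hp, hpx⟩ :=
    h.exists_mem_span_of_mem_span (hA ▸ Ideal.subset_span) hXB hY x.2 (hspan ⟨x, hx, rfl⟩)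
  have hsub : XA ∩ Subtype.val ⁻¹' Y ⊆ XA \ {x} := fun y hy =>
    Set.mem_sdiff_singleton.2 ⟨hy.1, by rintro rfl; exact hxY hy.2⟩
  have hxspan : x ∈ Ideal.span (XA \ {x}) := Ideal.span_mono hsub (Subtype.ext hpx ▸ hp)
  refine hmin (XA \ {x}) ⟨Set.sdiff_subset, fun hX => (hX hx).2 rfl⟩ <| Eq.trans ?_ hA
  refine le_antisymm (Ideal.span_mono Set.sdiff_subset) (Ideal.span_le.2 ?_)
  intro y hy
  by_cases hyx : y = x
  · rw [hyx]
    exact hxspan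
  · exact Ideal.subset_span (Set.mem_sdiff_singleton.2 ⟨hy, hyx⟩)

lemma exists_colonIdeal_eq_span (h : IsGradedInternalSum 𝒞 A B)
    (hXA : XA ⊆ A.augIdeal 𝒞) (hB : Ideal.span XB = B.augIdeal 𝒞)
    (hcolon : ∀ Y ⊂ XA, ∀ z ∈ XA \ Y, ∃ Z ⊆ XA, colonIdeal (Ideal.span Y) z = Ideal.span Z)
    (hY : Y ⊆ Subtype.val '' XA ∪ Subtype.val '' XB) {z : A} (hz : z ∈ XA)
    (hzY : (z : C) ∉ Y) :
    ∃ Z ⊆ Subtype.val '' XA ∪ Subtype.val '' XB, colonIdeal (Ideal.span Y) z = Ideal.span Z := by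
  have hXB : XB ⊆ B.augIdeal 𝒞 := hB ▸ Ideal.subset_span
  obtain ⟨Z, hZ, hZeq⟩ := hcolon (XA ∩ Subtype.val ⁻¹' Y)
    ⟨Set.inter_subset_left, fun hX => hzY (hX hz).2⟩ z ⟨hz, fun hz' => hzY hz'.2⟩
  refine ⟨Subtype.val '' Z ∪ Subtype.val '' XB,
    Set.union_subset_union_left _ (Set.image_mono hZ),
    le_antisymm (fun g hg => ?_) (Ideal.span_le.2 ?_)⟩
  · obtain ⟨u, hu, w, hw, hw0, rfl⟩ := h.exists_eq_add g
    rw [mem_colonIdeal, add_mul, (h.mul_eq_zero z z.2 w hw (hXA hz) hw0).2, add_zero] at hg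
    obtain ⟨p, hp, hpu⟩ := h.exists_mem_span_of_mem_span hXA hXB hY (mul_mem hu z.2) hg
    have huZ : (⟨u, hu⟩ : A) ∈ Ideal.span Z := by
      rw [← hZeq, mem_colonIdeal, show (⟨u, hu⟩ * z : A) = p from Subtype.ext hpu.symm]
      exact hp
    have hwXB : (⟨w, hw⟩ : B) ∈ Ideal.span XB := by rwa [hB]
    rw [Ideal.span_union]
    exact Submodule.add_mem_sup (coe_mem_span_image_of_mem_span huZ)
      (coe_mem_span_image_of_mem_span hwXB)
  · rintro _ (⟨y, hy, rfl⟩ | ⟨y, hy, rfl⟩)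
    · have hyz : y * z ∈ Ideal.span (XA ∩ Subtype.val ⁻¹' Y) := by
        rw [← mem_colonIdeal, hZeq]
        exact Ideal.subset_span hy
      exact mem_colonIdeal.2 <| Ideal.span_mono (by rintro _ ⟨y, hy, rfl⟩; exact hy.2)
        (coe_mem_span_image_of_mem_span hyz)
    · exact mem_colonIdeal.2 ((h.mul_eq_zero z z.2 y y.2 (hXA hz) (hXB hy)).2 ▸ zero_mem _)

theorem stronglyKoszulWrt_image_union (h : IsGradedInternalSum 𝒞 A B)
    (hA : StronglyKoszulWrt (A.augIdeal 𝒞) XA) (hB : StronglyKoszulWrt (B.augIdeal 𝒞) XB) :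
    StronglyKoszulWrt (augIdeal 𝒞) (Subtype.val '' XA ∪ Subtype.val '' XB) := by
  have hXA : XA ⊆ A.augIdeal 𝒞 := hA.1 ▸ Ideal.subset_span
  have hXB : XB ⊆ B.augIdeal 𝒞 := hB.1 ▸ Ideal.subset_span
  have hspan := h.span_image_union_eq_augIdeal hA.1 hB.1
  refine ⟨hspan, fun Y hY hYspan => hY.2 ?_, fun Y hY z ⟨hzX, hzY⟩ => ?_⟩
  · have hX : Subtype.val '' XA ∪ Subtype.val '' XB ⊆ (Ideal.span Y : Set C) :=
      hYspan ▸ hspan ▸ Ideal.subset_span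
    exact Set.union_subset
      (h.image_subset_of_image_subset_span hA.1 hXB hA.2.1 hY.1 (Set.subset_union_left.trans hX))
      (h.symm.image_subset_of_image_subset_span hB.1 hXA hB.2.1
        (hY.1.trans (Set.union_comm _ _).subset) (Set.subset_union_right.trans hX))
  · rcases hzX with ⟨z, hz, rfl⟩ | ⟨z, hz, rfl⟩
    · exact h.exists_colonIdeal_eq_span hXA hB.1 hA.2.2 hY.1 hz hzY
    · obtain ⟨Z, hZ, hZeq⟩ := h.symm.exists_colonIdeal_eq_span hXB hA.1 hB.2.2
        (hY.1.trans (Set.union_comm _ _).subset) hz hzY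
      exact ⟨Z, hZ.trans (Set.union_comm _ _).subset, hZeq⟩

end IsGradedInternalSum

theorem stmt6_general {K C : Type*} [Field K] [Ring C] [Algebra K C]
    (𝒞 : ℕ → Submodule K C) [GradedAlgebra 𝒞]
    (hconn : 𝒞 0 = 1)
    (SA SB : Subalgebra K C)
    (hAhom : ∀ y ∈ SA, ∀ n : ℕ, ((DirectSum.decompose 𝒞 y n : 𝒞 n) : C) ∈ SA)
    (hBhom : ∀ y ∈ SB, ∀ n : ℕ, ((DirectSum.decompose 𝒞 y n : 𝒞 n) : C) ∈ SB)
    (hsum : ∀ n, 1 ≤ n →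
      𝒞 n = (Subalgebra.toSubmodule SA ⊓ 𝒞 n) ⊔ (Subalgebra.toSubmodule SB ⊓ 𝒞 n))
    (hdisj : ∀ n, 1 ≤ n →
      (Subalgebra.toSubmodule SA ⊓ 𝒞 n) ⊓ (Subalgebra.toSubmodule SB ⊓ 𝒞 n) = ⊥)
    (hann : ∀ u ∈ SA, ∀ w ∈ SB,
      ((DirectSum.decompose 𝒞 u 0 : 𝒞 0) : C) = 0 →
      ((DirectSum.decompose 𝒞 w 0 : 𝒞 0) : C) = 0 → u * w = 0 ∧ w * u = 0)
    (c d : ℕ)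
    (a : Fin c → SA)
    (b : Fin d → SB)
    -- `A` strongly Koszul w.r.t. `X_A`, `B` strongly Koszul w.r.t. `X_B`
    (hSKA : StronglyKoszulWrt
      (Ideal.span {y : SA | ∃ n : ℕ, (y : C) ∈ 𝒞 (n + 1)}) (Set.range a))
    (hSKB : StronglyKoszulWrt
      (Ideal.span {y : SB | ∃ n : ℕ, (y : C) ∈ 𝒞 (n + 1)}) (Set.range b)) :
    StronglyKoszulWrt (augIdeal 𝒞)
      ((Set.range fun i => ((a i : C))) ∪ (Set.range fun i => ((b i : C)))) := by
  have h : IsGradedInternalSum 𝒞 SA SB := ⟨hconn, hAhom, hBhom, hsum, hdisj, hann⟩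
  rw [span_homogeneous_pos_eq_augIdeal hAhom] at hSKA
  rw [span_homogeneous_pos_eq_augIdeal hBhom] at hSKB
  have := h.stronglyKoszulWrt_image_union hSKA hSKB
  rwa [← Set.range_comp, ← Set.range_comp] at this

/-- Let `C = A ⊓ B` be the internal direct sum of graded subalgebras
`A` and `B`.  If `A` is strongly Koszul with respect to a minimal system of homogeneous
generators `X_A = {a_1, …, a_c} ⊆ A_1` of `A_+`, and `B` is strongly Koszul with respect
to `X_B = {b_1, …, b_d} ⊆ B_1`, then `X_A ∪ X_B` is a minimal system of homogeneous
generators of `C_+` and `C` is strongly Koszul with respect to it. -/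
theorem stmt6 {K C : Type*} [Field K] [Ring C] [Algebra K C]
    (𝒞 : ℕ → Submodule K C) [GradedAlgebra 𝒞]
    (hconn : 𝒞 0 = 1)
    (hgen : Algebra.adjoin K ((𝒞 1 : Submodule K C) : Set C) = ⊤)
    (SA SB : Subalgebra K C)
    (hAhom : ∀ y ∈ SA, ∀ n : ℕ, ((DirectSum.decompose 𝒞 y n : 𝒞 n) : C) ∈ SA)
    (hBhom : ∀ y ∈ SB, ∀ n : ℕ, ((DirectSum.decompose 𝒞 y n : 𝒞 n) : C) ∈ SB)
    (hAgen : Algebra.adjoin K ((SA : Set C) ∩ ((𝒞 1 : Submodule K C) : Set C)) = SA)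
    (hBgen : Algebra.adjoin K ((SB : Set C) ∩ ((𝒞 1 : Submodule K C) : Set C)) = SB)
    (hsum : ∀ n, 1 ≤ n →
      𝒞 n = (Subalgebra.toSubmodule SA ⊓ 𝒞 n) ⊔ (Subalgebra.toSubmodule SB ⊓ 𝒞 n))
    (hdisj : ∀ n, 1 ≤ n →
      (Subalgebra.toSubmodule SA ⊓ 𝒞 n) ⊓ (Subalgebra.toSubmodule SB ⊓ 𝒞 n) = ⊥)
    (hann : ∀ u ∈ SA, ∀ w ∈ SB,
      ((DirectSum.decompose 𝒞 u 0 : 𝒞 0) : C) = 0 →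
      ((DirectSum.decompose 𝒞 w 0 : 𝒞 0) : C) = 0 → u * w = 0 ∧ w * u = 0)
    (c d : ℕ)
    (a : Fin c → SA) (ha1 : ∀ i, ((a i : C)) ∈ 𝒞 1)
    (b : Fin d → SB) (hb1 : ∀ i, ((b i : C)) ∈ 𝒞 1)
    -- `A` strongly Koszul w.r.t. `X_A`, `B` strongly Koszul w.r.t. `X_B`
    (hSKA : StronglyKoszulWrt
      (Ideal.span {y : SA | ∃ n : ℕ, (y : C) ∈ 𝒞 (n + 1)}) (Set.range a))
    (hSKB : StronglyKoszulWrt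
      (Ideal.span {y : SB | ∃ n : ℕ, (y : C) ∈ 𝒞 (n + 1)}) (Set.range b)) :
    StronglyKoszulWrt (augIdeal 𝒞)
      ((Set.range fun i => ((a i : C))) ∪ (Set.range fun i => ((b i : C)))) :=
  stmt6_general 𝒞 hconn SA SB hAhom hBhom hsum hdisj hann c d a b hSKA hSKB
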